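/- arXiv:2012.08945 — 3 statements merged into one kernel-verified Lean document; each statement's English description precedes it below -/
import Mathlib

section
/- Let n be a natural number and let γ : [0,1] → ℝⁿ be a map that is monotone (non-decreasing with respect to the componentwise order on ℝⁿ) and continuous when [0,1] and ℝⁿ carry their standard (Euclidean) topologies. Then γ is also continuous when [0,1] carries the lower topology (subspace topology from the left order topology on ℝ) and ℝⁿ carries the product of n copies of the lower topology on ℝ. (Every directed path in ⃗ℝⁿ is an irreversible path in irℝⁿ.) -/
/-- The lower (left order) topology on ℝ, generated by the open rays (−∞, a)
(equivalently, by the complements of the closed upper rays [a, ∞)). -/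
def lowerTopR : TopologicalSpace ℝ :=
  TopologicalSpace.generateFrom {s : Set ℝ | ∃ a : ℝ, s = Set.Iio a}

/-- ir-I : the unit interval [0,1] with the subspace topology inherited from
the lower topology on ℝ. -/
def irI : TopologicalSpace unitInterval :=
  lowerTopR.induced Subtype.val

/-- ir-ℝⁿ : ℝⁿ with the product topology of n copies of the lower topology on ℝ. -/
def irRn (n : ℕ) : TopologicalSpace (Fin n → ℝ) :=
  @Pi.topologicalSpace (Fin n) (fun _ => ℝ) (fun _ => lowerTopR)

/-- A down-closed subset of [0,1] that is open for the standard topology is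
open for the lower topology: it is ∅, univ, or of the form {x | x < c}. -/
lemma irI_open_of_downclosed (S : Set unitInterval)
    (hdown : ∀ ⦃x y : unitInterval⦄, x ≤ y → y ∈ S → x ∈ S)
    (hop : IsOpen S) : @IsOpen _ irI S := by
  rcases Set.eq_empty_or_nonempty S with rfl | hne
  · exact @isOpen_empty _ irI
  by_cases huniv : S = Set.univ
  · rw [huniv]; exact @isOpen_univ _ irI
  have hbdd : BddAbove (Subtype.val '' S) := ⟨1, by rintro _ ⟨y, -, rfl⟩; exact y.2.2⟩
  have hnei : (Subtype.val '' S).Nonempty := hne.image _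
  set c := sSup (Subtype.val '' S) with hc
  have hSc : S = Subtype.val ⁻¹' Set.Iio c := by
    ext x
    constructor
    · intro hx
      have hle : (x : ℝ) ≤ c := le_csSup hbdd ⟨x, hx, rfl⟩
      rcases lt_or_eq_of_le hle with h | h
      · exact h
      exfalso
      -- x.val = c and x ∈ S
      rcases lt_or_eq_of_le x.2.2 with h1 | h1
      · -- c = x.val < 1 : standard openness gives a point of S above c, contradiction
        have hS : S ∈ nhds x := hop.mem_nhds hx
        rw [mem_nhds_subtype] at hS
        obtain ⟨U, hU, hUS⟩ := hS
        obtain ⟨ε, hε, hball⟩ := Metric.mem_nhds_iff.1 hU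
        set z : ℝ := min ((x : ℝ) + ε / 2) (((x : ℝ) + 1) / 2) with hz
        have hxz : (x : ℝ) < z := lt_min (by linarith) (by linarith)
        have hz0 : 0 ≤ z := le_trans x.2.1 hxz.le
        have hz1 : z ≤ 1 := le_trans (min_le_right _ _) (by linarith [x.2.2])
        have hzball : z ∈ Metric.ball (x : ℝ) ε := by
          rw [Metric.mem_ball, Real.dist_eq, abs_of_pos (by linarith)]
          have := min_le_left ((x : ℝ) + ε / 2) (((x : ℝ) + 1) / 2)
          linarith
        have hzS : (⟨z, hz0, hz1⟩ : unitInterval) ∈ S := hUS (hball hzball)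
        have : z ≤ c := le_csSup hbdd ⟨_, hzS, rfl⟩
        rw [← h] at this
        linarith
      · -- x.val = 1, so S = univ by down-closedness
        apply huniv
        ext y
        simp only [Set.mem_univ, iff_true]
        exact hdown (by rw [← Subtype.coe_le_coe, h1]; exact y.2.2) hx
    · intro hx
      obtain ⟨_, ⟨y, hy, rfl⟩, hxy⟩ := exists_lt_of_lt_csSup hnei hx
      exact hdown (by exact_mod_cast hxy.le) hy
  rw [hSc]
  exact ⟨Set.Iio c, TopologicalSpace.GenerateOpen.basic _ ⟨c, rfl⟩, rfl⟩

/-- A monotone, standard-continuous map [0,1] → ℝ is continuous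
from ir-I to the lower topology on ℝ. -/
lemma lower_cont (f : unitInterval → ℝ) (hm : Monotone f) (hc : Continuous f) :
    @Continuous _ _ irI lowerTopR f := by
  rw [show lowerTopR = TopologicalSpace.generateFrom {s : Set ℝ | ∃ a : ℝ, s = Set.Iio a} from rfl,
    continuous_generateFrom_iff]
  rintro s ⟨a, rfl⟩
  exact irI_open_of_downclosed _ (fun x y hxy hy => lt_of_le_of_lt (hm hxy) hy)
    (hc.isOpen_preimage _ isOpen_Iio)

/-- Every directed path in ⃗ℝⁿ (monotone and continuous for the standard
topologies) is an irreversible path in ir-ℝⁿ. -/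
theorem stmt_0 (n : ℕ) (γ : unitInterval → (Fin n → ℝ))
    (hmono : Monotone γ) (hcont : Continuous γ) :
    @Continuous _ _ irI (irRn n) γ := by
  exact @continuous_pi _ _ _ irI (fun _ => lowerTopR) γ
    (fun i => lower_cont (fun x => γ x i) (fun a b h => hmono h i)
      ((continuous_apply i).comp hcont))
end

section
/- Let n be a natural number and let x, y ∈ ℝⁿ. There exists a monotone (componentwise non-decreasing) map γ : [0,1] → ℝⁿ, continuous for the standard topologies, with γ(0) = x and γ(1) = y, if and only if there exists a map δ : [0,1] → ℝⁿ with δ(0) = x and δ(1) = y that is continuous when [0,1] carries the subspace lower topology and ℝⁿ carries the product of n copies of the lower topology on ℝ. (The reachability relation by directed paths in ⃗ℝⁿ equals the reachability relation by irreversible paths in ir-ℝⁿ.) -/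
/-!
Both reachability relations are the componentwise order `x ≤ y`. For d-paths this is clear: a
monotone path gives `x ≤ y`, and the straight segment from `x` to `y` is a d-path. For ir-paths,
continuous maps preserve specialization, and in lower topologies (and hence in ir-I and ir-ℝⁿ)
`a ⤳ b` is just `a ≤ b`; since `0 ⤳ 1` in ir-I, an ir-path from `x` to `y` forces `x ≤ y`.
Conversely, if `x ≤ y` the path that rests at `x` and jumps to `y` at time `1` is an ir-path: the
preimages of the rays `(-∞, a)` under each coordinate are `∅`, `[0, 1)` or `[0, 1]`.
-/

open Set Topology

lemma lowerTopR_eq_lower : lowerTopR = Topology.lower ℝ := by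
  simp only [lowerTopR, Topology.lower, compl_Ici, eq_comm]

lemma lowerTopR_specializes_iff {a b : ℝ} : @Specializes ℝ lowerTopR a b ↔ a ≤ b := by
  have := @IsLower.mk ℝ lowerTopR _ lowerTopR_eq_lower
  rw [@specializes_iff_closure_subset ℝ lowerTopR, @IsLower.closure_singleton ℝ _ lowerTopR,
    @IsLower.closure_singleton ℝ _ lowerTopR, Ici_subset_Ici]

lemma irI_specializes_iff {s t : unitInterval} : @Specializes _ irI s t ↔ s ≤ t := by
  have hval := @IsInducing.mk _ _ irI lowerTopR Subtype.val rfl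
  exact (@IsInducing.specializes_iff _ _ irI lowerTopR _ _ _ hval).symm.trans
    lowerTopR_specializes_iff

lemma irRn_specializes_iff {n : ℕ} {x y : Fin n → ℝ} : @Specializes _ (irRn n) x y ↔ x ≤ y :=
  (@specializes_pi _ _ (fun _ => lowerTopR) _ _).trans
    (forall_congr' fun _ => lowerTopR_specializes_iff)

lemma continuous_irI_lowerTopR_ite_one {a b : ℝ} (hab : a ≤ b) :
    Continuous[irI, lowerTopR] fun t : unitInterval => if t = 1 then b else a := by
  refine continuous_generateFrom_iff.2 ?_
  rintro _ ⟨c, rfl⟩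
  by_cases hb : b < c
  · convert @isOpen_univ _ irI
    ext t
    simp only [mem_preimage, mem_Iio, mem_univ, iff_true]
    split_ifs <;> linarith
  by_cases ha : a < c
  · refine ⟨Iio 1, .basic _ ⟨1, rfl⟩, ?_⟩
    ext t
    simp only [mem_preimage, mem_Iio]
    split_ifs with ht <;> simp [ht, ha, hb, unitInterval.lt_one_iff_ne_one]
  · convert @isOpen_empty _ irI
    ext t
    simp only [mem_preimage, mem_Iio, mem_empty_iff_false, iff_false]
    split_ifs <;> linarith

lemma exists_monotone_path_iff_le {ι : Type*} {x y : ι → ℝ} :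
    (∃ γ : unitInterval → (ι → ℝ), Monotone γ ∧ Continuous γ ∧ γ 0 = x ∧ γ 1 = y) ↔ x ≤ y := by
  constructor
  · rintro ⟨γ, hγ, -, rfl, rfl⟩
    exact hγ unitInterval.nonneg'
  · intro hxy
    refine ⟨fun t => x + (t : ℝ) • (y - x), fun s t hst => ?_, by fun_prop, by simp, by simp⟩
    have hst' : (s : ℝ) ≤ t := hst
    exact add_le_add_right (smul_le_smul_of_nonneg_right hst' (sub_nonneg.2 hxy)) x

lemma exists_irPath_iff_le {n : ℕ} {x y : Fin n → ℝ} :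
    (∃ δ : unitInterval → (Fin n → ℝ), Continuous[irI, irRn n] δ ∧ δ 0 = x ∧ δ 1 = y) ↔
      x ≤ y := by
  constructor
  · rintro ⟨δ, hδ, rfl, rfl⟩
    exact irRn_specializes_iff.1
      (@Specializes.map _ _ irI (irRn n) _ _ _ (irI_specializes_iff.2 unitInterval.nonneg') hδ)
  · intro hxy
    refine ⟨fun t i => if t = 1 then y i else x i, ?_, by simp, by simp⟩
    exact @continuous_pi _ _ _ irI (fun _ => lowerTopR) _
      fun i => continuous_irI_lowerTopR_ite_one (hxy i)

/-- There is a d-path from x to y in ⃗ℝⁿ iff there is an ir-path from x to y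
in ir-ℝⁿ. -/
theorem stmt_1 (n : ℕ) (x y : Fin n → ℝ) :
    (∃ γ : unitInterval → (Fin n → ℝ),
        Monotone γ ∧ Continuous γ ∧ γ 0 = x ∧ γ 1 = y) ↔
    (∃ δ : unitInterval → (Fin n → ℝ),
        @Continuous _ _ irI (irRn n) δ ∧ δ 0 = x ∧ δ 1 = y) :=
  exists_monotone_path_iff_le.trans exists_irPath_iff_le.symm
end

section
/- Let n be a natural number and let x, y ∈ ℝⁿ. There exists a map γ : [0,1] → ℝⁿ with γ(0) = x and γ(1) = y that is continuous when [0,1] carries the subspace lower topology of ℝ and ℝⁿ carries the product of n copies of the lower topology on ℝ, if and only if xᵢ ≤ yᵢ for every i ∈ {1,…,n}. (The pair (x,y) lies in the irreversible-path reachability relation of ir-ℝⁿ exactly when x ≤ y componentwise.) -/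
/-- Every set open in the lower topology is a lower set. -/
lemma lowerTopR_isLowerSet {V : Set ℝ} (hV : lowerTopR.IsOpen V) : IsLowerSet V := by
  induction hV with
  | basic s hs =>
      obtain ⟨a, rfl⟩ := hs
      exact fun b c hcb hb => lt_of_le_of_lt hcb hb
  | univ => exact fun _ _ _ _ => trivial
  | inter s t _ _ hs ht => exact hs.inter ht
  | sUnion S _ hS => exact isLowerSet_sUnion hS

/-- There is an ir-path from x to y in ir-ℝⁿ iff x ≤ y componentwise. -/
theorem stmt_3 (n : ℕ) (x y : Fin n → ℝ) :
    (∃ γ : unitInterval → (Fin n → ℝ),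
        @Continuous _ _ irI (irRn n) γ ∧ γ 0 = x ∧ γ 1 = y) ↔
    (∀ i : Fin n, x i ≤ y i) := by
  constructor
  · rintro ⟨γ, hc, h0, h1⟩ i
    by_contra h
    push_neg at h
    -- coordinate map is continuous
    have hev : @Continuous _ _ (irRn n) lowerTopR (fun v : Fin n → ℝ => v i) :=
      @continuous_apply (Fin n) (fun _ => ℝ) (fun _ => lowerTopR) i
    have hf : @Continuous _ _ irI lowerTopR (fun t => γ t i) :=
      @Continuous.comp _ _ _ irI (irRn n) lowerTopR _ _ hev hc
    have hopen : irI.IsOpen ((fun t => γ t i) ⁻¹' Set.Iio (x i)) :=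
      @Continuous.isOpen_preimage _ _ irI lowerTopR _ hf _
        (TopologicalSpace.GenerateOpen.basic _ ⟨x i, rfl⟩)
    obtain ⟨V, hVopen, hVeq⟩ :=
      (@isOpen_induced_iff _ _ lowerTopR _ Subtype.val).mp hopen
    have h1V : (1 : ℝ) ∈ V := by
      have : (1 : unitInterval) ∈ Subtype.val ⁻¹' V := by
        rw [hVeq]; simp only [Set.mem_preimage, Set.mem_Iio, h1]; exact h
      exact this
    have h0V : (0 : ℝ) ∈ V := lowerTopR_isLowerSet hVopen (by norm_num) h1V
    have : (0 : unitInterval) ∈ (fun t => γ t i) ⁻¹' Set.Iio (x i) := by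
      rw [← hVeq]; exact h0V
    rw [Set.mem_preimage, h0] at this
    exact absurd (Set.mem_Iio.mp this) (lt_irrefl _)
  · intro hle
    refine ⟨fun t => if t = 1 then y else x, ?_, ?_, ?_⟩
    · apply @continuous_pi _ _ _ irI (fun _ => lowerTopR)
      intro i
      rw [show lowerTopR = TopologicalSpace.generateFrom
        {s : Set ℝ | ∃ a : ℝ, s = Set.Iio a} from rfl]
      rw [continuous_generateFrom_iff]
      rintro s ⟨a, rfl⟩
      by_cases hx : x i < a
      · by_cases hy : y i < a
        · have : ((fun t : unitInterval => (if t = 1 then y else x) i) ⁻¹' Set.Iio a)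
              = Set.univ := by
            ext t; simp only [Set.mem_preimage, Set.mem_Iio, Set.mem_univ, iff_true]
            split <;> assumption
          rw [this]; exact @isOpen_univ _ irI
        · have : ((fun t : unitInterval => (if t = 1 then y else x) i) ⁻¹' Set.Iio a)
              = Subtype.val ⁻¹' Set.Iio 1 := by
            ext t
            simp only [Set.mem_preimage, Set.mem_Iio]
            constructor
            · intro ht
              rcases lt_or_eq_of_le t.2.2 with h | h
              · exact h
              · exfalso
                have : t = 1 := Subtype.ext h
                rw [if_pos this] at ht
                exact hy ht
            · intro ht
              have : t ≠ 1 := by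
                intro h; rw [h] at ht; exact absurd ht (lt_irrefl _)
              rw [if_neg this]; exact hx
          rw [this]
          exact (@isOpen_induced_iff _ _ lowerTopR _ Subtype.val).mpr ⟨Set.Iio 1,
            TopologicalSpace.GenerateOpen.basic _ ⟨1, rfl⟩, rfl⟩
      · have : ((fun t : unitInterval => (if t = 1 then y else x) i) ⁻¹' Set.Iio a)
            = ∅ := by
          ext t; simp only [Set.mem_preimage, Set.mem_Iio, Set.mem_empty_iff_false, iff_false]
          intro ht
          split at ht
          · exact hx (lt_of_le_of_lt (hle i) ht)
          · exact hx ht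
        rw [this]; exact @isOpen_empty _ irI
    · simp
    · simp
end
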